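/- arXiv:2309.12031 — 2 statements merged into one kernel-verified Lean document; each statement's English description precedes it below -/
import Mathlib

section
/- (McNaughton's wrap-around rule) Let Δ_1, ..., Δ_n ≥ 0 be processing amounts with Δ_k ≤ T for all k and ∑_{k=1}^n Δ_k ≤ m·T. Then there exists a preemptive schedule on m machines in the interval [0, T] in which every job k receives total processing Δ_k, no job is processed on two machines simultaneously, and no machine processes two jobs simultaneously. Moreover each job is processed in at most two maximal intervals (so at most one preemption per job is introduced). -/
/-- McNaughton's wrap-around rule: If `Δ k ≤ T` for all `k` and
`∑ Δ k ≤ m T`, then there is a preemptive schedule on `m` machines in `[0, T]`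
giving each job total processing `Δ k`, no job on two machines simultaneously,
no machine processing two jobs simultaneously, and each job processed in at most
two intervals. -/
theorem stmt_6 (n m : ℕ) (hm : 0 < m) (T : ℝ) (hT : 0 ≤ T)
    (Δ : Fin n → ℝ) (hΔ0 : ∀ k, 0 ≤ Δ k) (hΔT : ∀ k, Δ k ≤ T)
    (hΔsum : ∑ k, Δ k ≤ m * T) :
    ∃ (M : Fin n → Fin 2 → Fin m) (s e : Fin n → Fin 2 → ℝ),
      (∀ k q, 0 ≤ s k q ∧ s k q ≤ e k q ∧ e k q ≤ T) ∧
      (∀ k, (e k 0 - s k 0) + (e k 1 - s k 1) = Δ k) ∧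
      (∀ k, Disjoint (Set.Ioo (s k 0) (e k 0)) (Set.Ioo (s k 1) (e k 1))) ∧
      (∀ k q k' q', (k, q) ≠ (k', q') → M k q = M k' q' →
        Disjoint (Set.Ioo (s k q) (e k q)) (Set.Ioo (s k' q') (e k' q'))) := by
  rcases eq_or_lt_of_le hT with hT0 | hT0
  · -- degenerate case T = 0
    refine ⟨fun _ _ => ⟨0, hm⟩, fun _ _ => 0, fun _ _ => 0, ?_, ?_, ?_, ?_⟩
    · exact fun k q => ⟨le_rfl, le_rfl, hT⟩
    · intro k
      have h1 := hΔT k; have h2 := hΔ0 k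
      have : Δ k = 0 := le_antisymm (hT0 ▸ h1) h2
      simp [this]
    · intro k; simp
    · intro k q k' q' _ _; simp
  · -- main case T > 0
    set A : ℕ → ℝ := fun t => ∑ j ∈ Finset.range t, if h : j < n then Δ ⟨j, h⟩ else 0 with hA
    have hAsucc : ∀ k : Fin n, A (k.1 + 1) = A k.1 + Δ k := by
      intro k
      simp [hA, Finset.sum_range_succ, k.isLt]
    have hAmono : Monotone A := by
      apply monotone_nat_of_le_succ
      intro t
      simp only [hA, Finset.sum_range_succ]
      split
      · next h => linarith [hΔ0 ⟨t, h⟩]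
      · simp
    have hAn : A n = ∑ k, Δ k := by
      show (∑ j ∈ Finset.range n, if h : j < n then Δ ⟨j, h⟩ else 0) = ∑ k, Δ k
      rw [← Fin.sum_univ_eq_sum_range (fun j => if h : j < n then Δ ⟨j, h⟩ else 0) n]
      exact Finset.sum_congr rfl fun j _ => by simp [j.isLt]
    have hAub : ∀ t, t ≤ n → A t ≤ m * T := fun t ht =>
      (hAmono ht).trans (hAn ▸ hΔsum)
    have hA0 : ∀ t, 0 ≤ A t := fun t => Finset.sum_nonneg fun j _ => by
      split
      · exact hΔ0 _
      · exact le_rfl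
    set i : Fin n → ℕ := fun k => ⌊A k.1 / T⌋₊ with hi
    have hfl : ∀ k : Fin n, (i k : ℝ) * T ≤ A k.1 := by
      intro k
      have h1 : (⌊A k.1 / T⌋₊ : ℝ) ≤ A k.1 / T := Nat.floor_le (div_nonneg (hA0 k.1) hT)
      have h2 : (A k.1 / T) * T = A k.1 := div_mul_cancel₀ _ (ne_of_gt hT0)
      rw [hi]
      nlinarith
    have hfu : ∀ k : Fin n, A k.1 < ((i k : ℝ) + 1) * T := by
      intro k
      have h1 : A k.1 / T < (⌊A k.1 / T⌋₊ : ℝ) + 1 := Nat.lt_floor_add_one _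
      have h2 : (A k.1 / T) * T = A k.1 := div_mul_cancel₀ _ (ne_of_gt hT0)
      rw [hi]
      nlinarith
    set M : Fin n → Fin 2 → Fin m := fun k =>
      ![⟨min (i k) (m - 1), lt_of_le_of_lt (min_le_right _ _) (Nat.sub_lt hm Nat.one_pos)⟩,
        ⟨min (i k + 1) (m - 1), lt_of_le_of_lt (min_le_right _ _) (Nat.sub_lt hm Nat.one_pos)⟩]
      with hM
    set s : Fin n → Fin 2 → ℝ := fun k => ![A k.1 - (i k : ℝ) * T, 0] with hs
    set e : Fin n → Fin 2 → ℝ := fun k =>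
      ![min T (A (k.1 + 1) - (i k : ℝ) * T),
        max 0 (A (k.1 + 1) - ((i k : ℝ) + 1) * T)] with he
    have key : ∀ (k : Fin n) (q : Fin 2), (Set.Ioo (s k q) (e k q)).Nonempty →
        (M k q).1 = i k + q.1 ∧
        ∀ x ∈ Set.Ioo (s k q) (e k q),
          A k.1 < x + ((i k : ℝ) + (q.1 : ℝ)) * T ∧
            x + ((i k : ℝ) + (q.1 : ℝ)) * T < A (k.1 + 1) := by
      intro k q hne
      obtain ⟨x0, hx0⟩ := hne
      have hbub : A (k.1 + 1) ≤ m * T := hAub _ k.isLt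
      fin_cases q
      · simp only [hs, he, hM, Fin.mk_zero, Fin.mk_one, Matrix.cons_val_zero, Matrix.cons_val_one,
          Matrix.head_cons, Fin.val_zero, Fin.val_one, Fin.val_mk, Nat.cast_zero, Nat.cast_one,
          add_zero, Nat.add_zero, Set.mem_Ioo] at hx0 ⊢
        have hΔpos : A k.1 < A (k.1 + 1) := by
          have := lt_of_lt_of_le (hx0.1.trans hx0.2) (min_le_right _ _)
          linarith
        have him : i k < m := by
          by_contra hcon
          push_neg at hcon
          have h1 : (m : ℝ) * T ≤ (i k : ℝ) * T := by
            have : (m : ℝ) ≤ (i k : ℝ) := by exact_mod_cast hcon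
            nlinarith
          have h2 : A k.1 ≤ m * T := hAub _ (le_of_lt k.isLt)
          have h3 : A (k.1 + 1) ≤ m * T := hbub
          linarith [hfl k]
        refine ⟨by omega, ?_⟩
        intro x hx
        try simp only [Set.mem_Ioo] at hx
        constructor
        · linarith [hx.1]
        · have := lt_of_lt_of_le hx.2 (min_le_right T _)
          linarith
      · simp only [hs, he, hM, Fin.mk_zero, Fin.mk_one, Matrix.cons_val_zero, Matrix.cons_val_one,
          Matrix.head_cons, Fin.val_zero, Fin.val_one, Fin.val_mk, Nat.cast_zero, Nat.cast_one,
          add_zero, Nat.add_zero, Set.mem_Ioo] at hx0 ⊢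
        have hb : ((i k : ℝ) + 1) * T < A (k.1 + 1) := by
          rcases le_or_gt (A (k.1 + 1) - ((i k : ℝ) + 1) * T) 0 with h | h
          · have h2 := hx0.2
            rw [max_eq_left h] at h2
            linarith [hx0.1]
          · linarith
        have him : i k + 1 < m := by
          by_contra hcon
          push_neg at hcon
          have h1 : (m : ℝ) * T ≤ ((i k : ℝ) + 1) * T := by
            have : (m : ℝ) ≤ (i k : ℝ) + 1 := by exact_mod_cast hcon
            nlinarith
          linarith
        refine ⟨by omega, ?_⟩
        intro x hx
        try simp only [Set.mem_Ioo] at hx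
        have hx2 : x < A (k.1 + 1) - ((i k : ℝ) + 1) * T :=
          lt_of_lt_of_le hx.2 (max_le (by linarith [hx.1]) le_rfl)
        constructor
        · linarith [hfu k, hx.1]
        · linarith
    refine ⟨M, s, e, ?_, ?_, ?_, ?_⟩
    · intro k q
      fin_cases q
      · simp only [hs, he, hM, Fin.mk_zero, Fin.mk_one, Matrix.cons_val_zero, Matrix.cons_val_one,
          Matrix.head_cons, Fin.val_zero, Fin.val_one, Fin.val_mk, Nat.cast_zero, Nat.cast_one,
          add_zero, Nat.add_zero, Set.mem_Ioo]
        refine ⟨by linarith [hfl k], ?_, min_le_left _ _⟩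
        have h1 : A k.1 - (i k : ℝ) * T ≤ T := by linarith [hfu k]
        have h2 : A k.1 - (i k : ℝ) * T ≤ A (k.1 + 1) - (i k : ℝ) * T := by
          linarith [hAsucc k, hΔ0 k]
        exact le_min h1 h2
      · simp only [hs, he, hM, Fin.mk_zero, Fin.mk_one, Matrix.cons_val_zero, Matrix.cons_val_one,
          Matrix.head_cons, Fin.val_zero, Fin.val_one, Fin.val_mk, Nat.cast_zero, Nat.cast_one,
          add_zero, Nat.add_zero, Set.mem_Ioo]
        refine ⟨le_rfl, le_max_left _ _, ?_⟩
        have h1 : A (k.1 + 1) - ((i k : ℝ) + 1) * T ≤ T := by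
          nlinarith [hfu k, hΔT k, hAsucc k]
        exact max_le hT h1
    · intro k
      simp only [hs, he, hM, Fin.mk_zero, Fin.mk_one, Matrix.cons_val_zero, Matrix.cons_val_one,
          Matrix.head_cons, Fin.val_zero, Fin.val_one, Fin.val_mk, Nat.cast_zero, Nat.cast_one,
          add_zero, Nat.add_zero, Set.mem_Ioo]
      have hb := hAsucc k
      rcases le_total (A (k.1 + 1) - (i k : ℝ) * T) T with h | h
      · rw [min_eq_right h, max_eq_left (by linarith)]
        linarith
      · rw [min_eq_left h, max_eq_right (by linarith)]
        linarith
    · intro k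
      simp only [hs, he, hM, Fin.mk_zero, Fin.mk_one, Matrix.cons_val_zero, Matrix.cons_val_one,
          Matrix.head_cons, Fin.val_zero, Fin.val_one, Fin.val_mk, Nat.cast_zero, Nat.cast_one,
          add_zero, Nat.add_zero, Set.mem_Ioo]
      rw [Set.disjoint_left]
      intro x hx hx'
      simp only [Set.mem_Ioo] at hx hx'
      have hy : 0 < A (k.1 + 1) - ((i k : ℝ) + 1) * T := by
        rcases le_or_gt (A (k.1 + 1) - ((i k : ℝ) + 1) * T) 0 with hz | hz
        · rw [max_eq_left hz] at hx'
          exact absurd (hx'.1.trans hx'.2) (lt_irrefl 0)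
        · exact hz
      have h1 : x < A (k.1 + 1) - ((i k : ℝ) + 1) * T := by
        have := hx'.2
        rwa [max_eq_right hy.le] at this
      have h2 : A (k.1 + 1) = A k.1 + Δ k := hAsucc k
      have h3 := hΔT k
      linarith [hx.1]
    · intro k q k' q' hne hMeq
      rw [Set.disjoint_left]
      intro x hx hx'
      have hk : (Set.Ioo (s k q) (e k q)).Nonempty := ⟨x, hx⟩
      have hk' : (Set.Ioo (s k' q') (e k' q')).Nonempty := ⟨x, hx'⟩
      obtain ⟨hm1, hg1⟩ := key k q hk
      obtain ⟨hm2, hg2⟩ := key k' q' hk'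
      have hnat : i k + q.1 = i k' + q'.1 := by
        rw [← hm1, ← hm2, hMeq]
      have hoff : ((i k : ℝ) + (q.1 : ℝ)) * T = ((i k' : ℝ) + (q'.1 : ℝ)) * T := by
        have : ((i k + q.1 : ℕ) : ℝ) = ((i k' + q'.1 : ℕ) : ℝ) := by exact_mod_cast hnat
        push_cast at this
        rw [this]
      obtain ⟨ha1, hb1⟩ := hg1 x hx
      obtain ⟨ha2, hb2⟩ := hg2 x hx'
      rw [hoff] at ha1 hb1
      rcases lt_trichotomy k.1 k'.1 with hlt | heq | hgt
      · have : A (k.1 + 1) ≤ A k'.1 := hAmono hlt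
        linarith
      · have hkk : k = k' := Fin.ext heq
        subst hkk
        have hqq : q ≠ q' := by
          intro h; exact hne (by rw [h])
        have : q.1 = q'.1 := by omega
        exact hqq (Fin.ext this)
      · have : A (k'.1 + 1) ≤ A k.1 := hAmono hgt
        linarith
end

section
/- Processing each unfinished job j at rate w_j / w(U_t) on a single machine (where U_t is the set of unfinished jobs and w(U_t) their total weight) is a 2-competitive non-clairvoyant strategy for minimizing total weighted completion time of independent jobs: the resulting schedule ALG satisfies ∑_j w_j C_j^{ALG} ≤ 2 ∑_j w_j C_j^{OPT} for every instance, where OPT is an optimal (clairvoyant) single-machine schedule. -/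
/-!
While two jobs `j` and `k` are both unfinished, the proportional rule gives them work in the
ratio `w j : w k`, and as long as some job is unfinished the machine runs at full rate. Hence
`C j` is the total work done by time `C j`, and the work `k` receives by then is at most both
`p k` and `w k * p j / w j`; so `∑ w C ≤ ∑_{j,k} min (w k * p j) (w j * p k)`.

In any feasible schedule the jobs with `C' k ≤ C' j` are processed within `[0, C' j]`, so
`∑ w C' ≥ ∑_j ∑_{C' k ≤ C' j} w j * p k`. Adding this bound to its copy with `j` and `k`
swapped covers every ordered pair `(j, k)` by at least one of `w j * p k`, `w k * p j`,
which gives `2 ∑ w C' ≥ ∑_{j,k} min (w k * p j) (w j * p k)`.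
-/

open MeasureTheory Set Finset

theorem intervalIntegrable_of_nonneg_of_le_one {f : ℝ → ℝ} (hf : Measurable f)
    (h0 : ∀ t, 0 ≤ t → 0 ≤ f t) (h1 : ∀ t, 0 ≤ t → f t ≤ 1) {a b : ℝ} (ha : 0 ≤ a)
    (hb : 0 ≤ b) : IntervalIntegrable f volume a b := by
  refine intervalIntegrable_const.mono_fun' (g := fun _ => (1 : ℝ)) hf.aestronglyMeasurable ?_
  filter_upwards [ae_restrict_mem measurableSet_uIoc] with x hx
  have hx0 : 0 ≤ x := (le_min ha hb).trans hx.1.le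
  rw [Real.norm_eq_abs, abs_of_nonneg (h0 x hx0)]
  exact h1 x hx0

theorem integral_eq_at_first_hitting_time {f : ℝ → ℝ} {c p : ℝ}
    (hf : IntervalIntegrable f volume 0 c) (hc : 0 ≤ c) (hp : 0 < p)
    (hdone : p ≤ ∫ s in (0 : ℝ)..c, f s)
    (hmin : ∀ t, 0 ≤ t → p ≤ ∫ s in (0 : ℝ)..t, f s → c ≤ t) :
    ∫ s in (0 : ℝ)..c, f s = p := by
  have hcont : ContinuousOn (fun t => ∫ s in (0 : ℝ)..t, f s) (Icc 0 c) := by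
    simpa only [uIcc_of_le hc] using
      intervalIntegral.continuousOn_primitive_interval' hf left_mem_uIcc
  obtain ⟨t, ⟨ht0, htc⟩, hpt⟩ :=
    intermediate_value_Icc hc hcont ⟨by simpa using hp.le, hdone⟩
  obtain rfl : t = c := le_antisymm htc (hmin t ht0 hpt.ge)
  exact hpt

theorem sum_sum_min_le_two_mul_sum_sum_filter {ι α : Type*} [Fintype ι] [LinearOrder α]
    (c : ι → α) {x : ι → ι → ℝ} (hx : ∀ j k, 0 ≤ x j k) :
    ∑ j, ∑ k, min (x k j) (x j k) ≤ 2 * ∑ j, ∑ k with c k ≤ c j, x j k := by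
  simp only [sum_filter]
  have hswap : ∑ j, ∑ k, (if c k ≤ c j then x j k else 0)
      = ∑ j, ∑ k, (if c j ≤ c k then x k j else 0) := sum_comm
  have hpair : ∀ j k, min (x k j) (x j k)
      ≤ (if c k ≤ c j then x j k else 0) + (if c j ≤ c k then x k j else 0) := by
    intro j k
    rcases le_total (c j) (c k) with h | h
    · have := hx j k
      split_ifs <;> linarith [min_le_left (x k j) (x j k)]
    · have := hx k j
      split_ifs <;> linarith [min_le_right (x k j) (x j k)]
  calc ∑ j, ∑ k, min (x k j) (x j k)
      ≤ ∑ j, ∑ k, ((if c k ≤ c j then x j k else 0) + (if c j ≤ c k then x k j else 0)) :=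
        sum_le_sum fun j _ => sum_le_sum fun k _ => hpair j k
    _ = 2 * ∑ j, ∑ k, (if c k ≤ c j then x j k else 0) := by
        simp only [sum_add_distrib, hswap]
        ring

section Feasible

variable {ι : Type*} [Fintype ι] {R : ι → ℝ → ℝ}

theorem sum_le_of_le_integral (hmeas : ∀ j, Measurable (R j)) (h0 : ∀ j t, 0 ≤ R j t)
    (h1 : ∀ j t, R j t ≤ 1) (hsum : ∀ t, ∑ j, R j t ≤ 1) {p : ι → ℝ} {t : ℝ} (ht : 0 ≤ t)
    (s : Finset ι) (hs : ∀ k ∈ s, p k ≤ ∫ u in (0 : ℝ)..t, R k u) : ∑ k ∈ s, p k ≤ t := by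
  have hint : ∀ k, IntervalIntegrable (R k) volume 0 t := fun k =>
    intervalIntegrable_of_nonneg_of_le_one (hmeas k) (fun u _ => h0 k u) (fun u _ => h1 k u)
      le_rfl ht
  calc ∑ k ∈ s, p k ≤ ∑ k ∈ s, ∫ u in (0 : ℝ)..t, R k u := sum_le_sum hs
    _ = ∫ u in (0 : ℝ)..t, ∑ k ∈ s, R k u :=
        (intervalIntegral.integral_finsetSum fun k _ => hint k).symm
    _ ≤ ∫ u in (0 : ℝ)..t, (1 : ℝ) := by
        refine intervalIntegral.integral_mono_on ht ?_ intervalIntegrable_const fun u _ => ?_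
        · simpa only [Finset.sum_fn] using IntervalIntegrable.sum s fun k _ => hint k
        · exact (sum_le_univ_sum_of_nonneg fun k => h0 k u).trans (hsum u)
    _ = t := by simp

theorem sum_filter_le_completion (hmeas : ∀ j, Measurable (R j)) (h0 : ∀ j t, 0 ≤ R j t)
    (h1 : ∀ j t, R j t ≤ 1) (hsum : ∀ t, ∑ j, R j t ≤ 1) {p C : ι → ℝ} (hC0 : ∀ j, 0 ≤ C j)
    (hdone : ∀ j, p j ≤ ∫ s in (0 : ℝ)..C j, R j s) (j : ι) :
    ∑ k with C k ≤ C j, p k ≤ C j := by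
  refine sum_le_of_le_integral hmeas h0 h1 hsum (hC0 j) _ fun k hk => (hdone k).trans ?_
  refine intervalIntegral.integral_mono_interval le_rfl (hC0 k) (mem_filter.1 hk).2
    (ae_of_all _ (h0 k)) ?_
  exact intervalIntegrable_of_nonneg_of_le_one (hmeas k) (fun u _ => h0 k u)
    (fun u _ => h1 k u) le_rfl (hC0 j)

end Feasible

section Proportional

variable {ι : Type*} [Fintype ι]

def IsProportionalRate (w : ι → ℝ) (R : ι → ℝ → ℝ) (C : ι → ℝ) : Prop :=
  ∀ j t, 0 ≤ t →
    (t < C j → R j t = w j / ∑ k with t < C k, w k) ∧ (C j ≤ t → R j t = 0)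

namespace IsProportionalRate

variable {p w : ι → ℝ} {R : ι → ℝ → ℝ} {C : ι → ℝ} {j k : ι} {a b t : ℝ}

theorem nonneg (hR : IsProportionalRate w R C) (hw : ∀ j, 0 ≤ w j) (ht : 0 ≤ t) :
    0 ≤ R j t := by
  rcases lt_or_ge t (C j) with h | h
  · rw [(hR j t ht).1 h]
    exact div_nonneg (hw j) (sum_nonneg fun k _ => hw k)
  · rw [(hR j t ht).2 h]

theorem le_one (hR : IsProportionalRate w R C) (hw : ∀ j, 0 ≤ w j) (ht : 0 ≤ t) :
    R j t ≤ 1 := by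
  rcases lt_or_ge t (C j) with h | h
  · rw [(hR j t ht).1 h]
    exact div_le_one_of_le₀ (single_le_sum (fun k _ => hw k) (by simpa using h))
      (sum_nonneg fun k _ => hw k)
  · rw [(hR j t ht).2 h]
    exact zero_le_one

theorem intervalIntegrable (hR : IsProportionalRate w R C) (hw : ∀ j, 0 ≤ w j)
    (hmeas : Measurable (R j)) (ha : 0 ≤ a) (hb : 0 ≤ b) : IntervalIntegrable (R j) volume a b :=
  intervalIntegrable_of_nonneg_of_le_one hmeas (fun _ => hR.nonneg hw) (fun _ => hR.le_one hw)
    ha hb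

theorem sum_eq_one (hR : IsProportionalRate w R C) (hw : ∀ j, 0 ≤ w j) (ht : 0 ≤ t)
    (htj : t < C j) (hwj : 0 < w j) : ∑ k, R k t = 1 := by
  set S := ∑ k with t < C k, w k
  have hS : 0 < S := hwj.trans_le (single_le_sum (fun k _ => hw k) (by simpa using htj))
  calc ∑ k, R k t = ∑ k, if t < C k then w k / S else 0 := by
        refine sum_congr rfl fun k _ => ?_
        split_ifs with hk
        exacts [(hR k t ht).1 hk, (hR k t ht).2 (not_lt.1 hk)]
    _ = 1 := by rw [← sum_filter, ← sum_div, div_self hS.ne']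

theorem weight_pos (hR : IsProportionalRate w R C) (hw : ∀ j, 0 ≤ w j) (hC : 0 ≤ C j)
    (hwork : 0 < ∫ s in (0 : ℝ)..C j, R j s) : 0 < w j := by
  refine (hw j).lt_of_ne fun h => hwork.ne' ?_
  have hzero : EqOn (R j) (fun _ => 0) (uIcc 0 (C j)) := by
    intro s hs
    rw [uIcc_of_le hC] at hs
    rcases lt_or_ge s (C j) with h' | h'
    · rw [(hR j s hs.1).1 h', ← h, zero_div]
    · exact (hR j s hs.1).2 h'
  simp [intervalIntegral.integral_congr hzero]

theorem integral_eq_integral_min (hR : IsProportionalRate w R C) (hw : ∀ j, 0 ≤ w j)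
    (hmeas : Measurable (R k)) (ht : 0 ≤ t) (hC : 0 ≤ C k) :
    ∫ s in (0 : ℝ)..t, R k s = ∫ s in (0 : ℝ)..min t (C k), R k s := by
  rcases le_total t (C k) with h | h
  · rw [min_eq_left h]
  · have hzero : EqOn (R k) (fun _ => 0) (uIcc (C k) t) := by
      intro s hs
      rw [uIcc_of_le h] at hs
      exact (hR k s (hC.trans hs.1)).2 hs.1
    rw [min_eq_right h, ← intervalIntegral.integral_add_adjacent_intervals
      (hR.intervalIntegrable hw hmeas le_rfl hC) (hR.intervalIntegrable hw hmeas hC ht),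
      intervalIntegral.integral_congr hzero]
    simp

theorem integral_le_integral_completion (hR : IsProportionalRate w R C) (hw : ∀ j, 0 ≤ w j)
    (hmeas : Measurable (R k)) (hC : 0 ≤ C k) (ht : 0 ≤ t) :
    ∫ s in (0 : ℝ)..t, R k s ≤ ∫ s in (0 : ℝ)..C k, R k s := by
  rw [hR.integral_eq_integral_min hw hmeas ht hC]
  refine intervalIntegral.integral_mono_interval le_rfl (le_min ht hC) (min_le_right _ _) ?_
    (hR.intervalIntegrable hw hmeas le_rfl hC)
  filter_upwards [ae_restrict_mem measurableSet_Ioc] with s hs using hR.nonneg hw hs.1.le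

theorem mul_integral_comm (hR : IsProportionalRate w R C) (hm : 0 ≤ t) (hj : t ≤ C j)
    (hk : t ≤ C k) : w j * ∫ s in (0 : ℝ)..t, R k s = w k * ∫ s in (0 : ℝ)..t, R j s := by
  simp only [← intervalIntegral.integral_const_mul]
  refine intervalIntegral.integral_congr_Ioo_of_le hm fun s hs => ?_
  simp only [(hR k s hs.1.le).1 (hs.2.trans_le hk), (hR j s hs.1.le).1 (hs.2.trans_le hj)]
  ring

theorem sum_integral_eq (hR : IsProportionalRate w R C) (hw : ∀ j, 0 ≤ w j)
    (hmeas : ∀ k, Measurable (R k)) (hC : 0 ≤ C j) (hwj : 0 < w j) :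
    ∑ k, ∫ s in (0 : ℝ)..C j, R k s = C j := by
  rw [← intervalIntegral.integral_finsetSum fun k _ =>
      hR.intervalIntegrable hw (hmeas k) le_rfl hC,
    intervalIntegral.integral_congr_Ioo_of_le hC (g := fun _ => 1)
      fun s hs => hR.sum_eq_one hw hs.1.le hs.2 hwj]
  simp

theorem mul_le_sum_min (hR : IsProportionalRate w R C) (hw : ∀ j, 0 ≤ w j)
    (hmeas : ∀ k, Measurable (R k)) (hC : ∀ k, 0 ≤ C k)
    (hwork : ∀ k, ∫ s in (0 : ℝ)..C k, R k s = p k) (hwj : 0 < w j) :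
    w j * C j ≤ ∑ k, min (w k * p j) (w j * p k) := by
  have hle : ∀ k t, 0 ≤ t → ∫ s in (0 : ℝ)..t, R k s ≤ p k := fun k t ht =>
    (hR.integral_le_integral_completion hw (hmeas k) (hC k) ht).trans_eq (hwork k)
  rw [← hR.sum_integral_eq hw hmeas (hC j) hwj, mul_sum]
  refine sum_le_sum fun k _ => le_min ?_ (mul_le_mul_of_nonneg_left (hle k _ (hC j)) (hw j))
  have hm : 0 ≤ min (C j) (C k) := le_min (hC j) (hC k)
  calc w j * ∫ s in (0 : ℝ)..C j, R k s = w j * ∫ s in (0 : ℝ)..min (C j) (C k), R k s := by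
        rw [hR.integral_eq_integral_min hw (hmeas k) (hC j) (hC k)]
    _ = w k * ∫ s in (0 : ℝ)..min (C j) (C k), R j s :=
        hR.mul_integral_comm hm (min_le_left _ _) (min_le_right _ _)
    _ ≤ w k * p j := mul_le_mul_of_nonneg_left (hle j _ hm) (hw k)

end IsProportionalRate

end Proportional

theorem stmt_9_general (n : ℕ) (p w : Fin n → ℝ) (hp : ∀ j, 0 < p j) (hw : ∀ j, 0 ≤ w j)
    -- the algorithm's schedule
    (R : Fin n → ℝ → ℝ) (hRmeas : ∀ j, Measurable (R j))
    (C : Fin n → ℝ)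
    (hrate : ∀ j, ∀ t, 0 ≤ t →
      (t < C j → R j t = w j / ∑ k ∈ Finset.univ.filter (fun k => t < C k), w k) ∧
      (C j ≤ t → R j t = 0))
    (hC0 : ∀ j, 0 ≤ C j)
    (hCdone : ∀ j, p j ≤ ∫ s in (0:ℝ)..(C j), R j s)
    (hCmin : ∀ j t, 0 ≤ t → p j ≤ ∫ s in (0:ℝ)..t, R j s → C j ≤ t)
    -- an arbitrary feasible (clairvoyant) schedule, in particular an optimal one
    (R' : Fin n → ℝ → ℝ) (hR'meas : ∀ j, Measurable (R' j))
    (hR'0 : ∀ j t, 0 ≤ R' j t) (hR'1 : ∀ j t, R' j t ≤ 1)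
    (hR'sum : ∀ t, ∑ j, R' j t ≤ 1)
    (C' : Fin n → ℝ) (hC'0 : ∀ j, 0 ≤ C' j)
    (hC'done : ∀ j, p j ≤ ∫ s in (0:ℝ)..(C' j), R' j s) :
    ∑ j, w j * C j ≤ 2 * ∑ j, w j * C' j := by
  have hR : IsProportionalRate w R C := hrate
  have hwork : ∀ j, ∫ s in (0 : ℝ)..C j, R j s = p j := fun j =>
    integral_eq_at_first_hitting_time (hR.intervalIntegrable hw (hRmeas j) le_rfl (hC0 j))
      (hC0 j) (hp j) (hCdone j) (hCmin j)
  have hwpos : ∀ j, 0 < w j := fun j =>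
    hR.weight_pos hw (hC0 j) ((hp j).trans_eq (hwork j).symm)
  calc ∑ j, w j * C j ≤ ∑ j, ∑ k, min (w k * p j) (w j * p k) :=
        sum_le_sum fun j _ => hR.mul_le_sum_min hw hRmeas hC0 hwork (hwpos j)
    _ ≤ 2 * ∑ j, ∑ k with C' k ≤ C' j, w j * p k :=
        sum_sum_min_le_two_mul_sum_sum_filter C' fun j k => mul_nonneg (hw j) (hp k).le
    _ ≤ 2 * ∑ j, w j * C' j := by
        gcongr with j
        rw [← mul_sum]
        exact mul_le_mul_of_nonneg_left
          (sum_filter_le_completion hR'meas hR'0 hR'1 hR'sum hC'0 hC'done j) (hw j)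

/-- Processing every unfinished job `j` at rate `w j / w(U_t)` on a
single machine (no precedence constraints) is `2`-competitive: the schedule ALG
(rates `R`, completion times `C`) satisfies `∑ w C ≤ 2 ∑ w C'` for every feasible
single-machine schedule (rates `R'`, completion times `C'`). -/
theorem stmt_9 (n : ℕ) (p w : Fin n → ℝ) (hp : ∀ j, 0 < p j) (hw : ∀ j, 0 ≤ w j)
    (hwsum : 0 < ∑ j, w j)
    -- the algorithm's schedule
    (R : Fin n → ℝ → ℝ) (hRmeas : ∀ j, Measurable (R j))
    (C : Fin n → ℝ)
    (hrate : ∀ j, ∀ t, 0 ≤ t →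
      (t < C j → R j t = w j / ∑ k ∈ Finset.univ.filter (fun k => t < C k), w k) ∧
      (C j ≤ t → R j t = 0))
    (hC0 : ∀ j, 0 ≤ C j)
    (hCdone : ∀ j, p j ≤ ∫ s in (0:ℝ)..(C j), R j s)
    (hCmin : ∀ j t, 0 ≤ t → p j ≤ ∫ s in (0:ℝ)..t, R j s → C j ≤ t)
    -- an arbitrary feasible (clairvoyant) schedule, in particular an optimal one
    (R' : Fin n → ℝ → ℝ) (hR'meas : ∀ j, Measurable (R' j))
    (hR'0 : ∀ j t, 0 ≤ R' j t) (hR'1 : ∀ j t, R' j t ≤ 1)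
    (hR'sum : ∀ t, ∑ j, R' j t ≤ 1)
    (C' : Fin n → ℝ) (hC'0 : ∀ j, 0 ≤ C' j)
    (hC'done : ∀ j, p j ≤ ∫ s in (0:ℝ)..(C' j), R' j s)
    (hC'min : ∀ j t, 0 ≤ t → p j ≤ ∫ s in (0:ℝ)..t, R' j s → C' j ≤ t) :
    ∑ j, w j * C j ≤ 2 * ∑ j, w j * C' j :=
  stmt_9_general n p w hp hw R hRmeas C hrate hC0 hCdone hCmin R' hR'meas hR'0 hR'1 hR'sum C' hC'0
    hC'done
end
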